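/- Let p > 1 and q > 0 with q ≠ 1, and define s_{p,q} : (0,∞) → ℝ by s_{p,q}(z) = − log_q( ((p−1) z)^{1/(1−p)} ), where log_q(s) = (s^{1−q} − 1)/(1−q) for s > 0. Then s_{p,q} is non-decreasing on (0,∞), and if moreover q ≥ p, then s_{p,q} is convex on (0,∞). -/

import Mathlib

/-! Writing x = (p - 1) z, the identity (x ^ a) ^ (1 - q) = x ^ (a (1 - q)) turns the function into
log_{q'}(x) / (p - 1) with q' = (p - q) / (p - 1). Every q-logarithm with q ≠ 1 is strictly
increasing, and it is convex once q ≤ 0, where s ^ (1 - q) has exponent at least 1; and q' ≤ 0 is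
exactly q ≥ p. -/

open MeasureTheory Real Set

noncomputable section

def RapidDecay {d : ℕ} (f : EuclideanSpace ℝ (Fin d) → ℝ) : Prop :=
  ∀ n k : ℕ, ∃ C : ℝ, ∀ x, ‖iteratedFDeriv ℝ n f x‖ * ‖x‖ ^ k ≤ C

def bv (d : ℕ) (i : Fin d) : EuclideanSpace ℝ (Fin d) := EuclideanSpace.single i 1

def lap {d : ℕ} (f : EuclideanSpace ℝ (Fin d) → ℝ) (x : EuclideanSpace ℝ (Fin d)) : ℝ :=
  ∑ i, fderiv ℝ (fun y => fderiv ℝ f y (bv d i)) x (bv d i)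

def hessEntry {d : ℕ} (f : EuclideanSpace ℝ (Fin d) → ℝ) (x : EuclideanSpace ℝ (Fin d))
    (i j : Fin d) : ℝ :=
  fderiv ℝ (fun y => fderiv ℝ f y (bv d j)) x (bv d i)

def hessNormSq {d : ℕ} (f : EuclideanSpace ℝ (Fin d) → ℝ) (x : EuclideanSpace ℝ (Fin d)) : ℝ :=
  ∑ i, ∑ j, (hessEntry f x i j) ^ 2

def divg {d : ℕ} (V : EuclideanSpace ℝ (Fin d) → EuclideanSpace ℝ (Fin d))
    (x : EuclideanSpace ℝ (Fin d)) : ℝ :=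
  ∑ i, fderiv ℝ V x (bv d i) i

def epd (p z : ℝ) : ℝ := p * z ^ (p - 1) / (p - 1)

def entE {d : ℕ} (p : ℝ) (u : EuclideanSpace ℝ (Fin d) → ℝ) : ℝ :=
  (1 / (p - 1)) * ∫ x, u x ^ p

def fisher {d : ℕ} (p : ℝ) (u : EuclideanSpace ℝ (Fin d) → ℝ) : ℝ :=
  ∫ x, u x * ‖gradient (fun y => epd p (u y)) x‖ ^ 2

def Jp {d : ℕ} (p : ℝ) (u : EuclideanSpace ℝ (Fin d) → ℝ) : ℝ :=
  2 * ∫ x, u x ^ p *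
    (hessNormSq (fun y => epd p (u y)) x + (p - 1) * (lap (fun y => epd p (u y)) x) ^ 2)

def renyi {d : ℕ} (p : ℝ) (u : EuclideanSpace ℝ (Fin d) → ℝ) : ℝ :=
  (1 / (1 - p)) * Real.log (∫ x, u x ^ p)

def qLog (q s : ℝ) : ℝ := (s ^ (1 - q) - 1) / (1 - q)

theorem qLog_rpow {x : ℝ} (hx : 0 ≤ x) (a q : ℝ) :
    qLog q (x ^ a) = a * qLog (1 - a * (1 - q)) x := by
  rcases eq_or_ne (a * (1 - q)) 0 with h | h
  · rcases mul_eq_zero.1 h with rfl | hq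
    · simp [qLog]
    · simp [qLog, hq]
  · have ha : a ≠ 0 := left_ne_zero_of_mul h
    have hq : 1 - q ≠ 0 := right_ne_zero_of_mul h
    simp only [qLog, sub_sub_cancel, ← rpow_mul hx]
    field_simp

theorem strictMonoOn_qLog {q : ℝ} (hq : q ≠ 1) : StrictMonoOn (qLog q) (Ioi 0) := by
  intro x hx y _ hxy
  rcases hq.lt_or_gt with hq | hq
  · exact div_lt_div_of_pos_right
      (sub_lt_sub_right (rpow_lt_rpow hx.out.le hxy (by linarith)) 1) (by linarith)
  · exact div_lt_div_of_neg_of_lt (by linarith)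
      (sub_lt_sub_right (rpow_lt_rpow_of_neg hx hxy (by linarith)) 1)

theorem convexOn_qLog {q : ℝ} (hq : q ≤ 0) : ConvexOn ℝ (Ici 0) (qLog q) := by
  have h := ((convexOn_rpow (p := 1 - q) (by linarith)).smul
    (inv_nonneg.2 (by linarith : (0 : ℝ) ≤ 1 - q))).add_const (-(1 - q)⁻¹)
  exact h.congr fun s _ => by simp only [qLog, smul_eq_mul, Pi.add_apply]; ring

theorem neg_qLog_rpow_eqOn {p : ℝ} (hp : 1 < p) (q : ℝ) :
    EqOn (fun z => -qLog q (((p - 1) * z) ^ (1 / (1 - p))))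
      (fun z => (p - 1)⁻¹ * qLog ((p - q) / (p - 1)) ((p - 1) * z)) (Ioi 0) := by
  intro z hz
  have hp' : p - 1 ≠ 0 := by linarith
  have hexp : 1 - 1 / (1 - p) * (1 - q) = (p - q) / (p - 1) := by
    field_simp [show 1 - p ≠ 0 by linarith]; ring
  simp only
  rw [qLog_rpow (mul_pos (by linarith) hz.out).le, hexp, ← neg_mul, one_div, ← inv_neg, neg_sub]

theorem stmt_general (p q : ℝ) (hp : 1 < p) (hq1 : q ≠ 1) :
    MonotoneOn (fun z : ℝ => -(((((p - 1) * z) ^ (1 / (1 - p))) ^ (1 - q) - 1) / (1 - q)))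
      (Set.Ioi 0) ∧
    (p ≤ q →
      ConvexOn ℝ (Set.Ioi 0)
        (fun z : ℝ => -(((((p - 1) * z) ^ (1 / (1 - p))) ^ (1 - q) - 1) / (1 - q)))) := by
  change MonotoneOn (fun z => -qLog q (((p - 1) * z) ^ (1 / (1 - p)))) (Ioi 0) ∧
    (p ≤ q → ConvexOn ℝ (Ioi 0) (fun z => -qLog q (((p - 1) * z) ^ (1 / (1 - p)))))
  have hp1 : 0 < p - 1 := by linarith
  have hscale : MapsTo (fun z => (p - 1) * z) (Ioi 0) (Ioi 0) := fun z hz => mul_pos hp1 hz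
  constructor
  · have hq' : (p - q) / (p - 1) ≠ 1 := by
      rw [Ne, div_eq_one_iff_eq hp1.ne']
      contrapose! hq1
      linarith
    refine MonotoneOn.congr (fun x hx y hy hxy => ?_) (neg_qLog_rpow_eqOn hp q).symm
    exact mul_le_mul_of_nonneg_left ((strictMonoOn_qLog hq').monotoneOn (hscale hx) (hscale hy)
      (mul_le_mul_of_nonneg_left hxy hp1.le)) (inv_nonneg.2 hp1.le)
  · intro hpq
    have hq' : (p - q) / (p - 1) ≤ 0 := div_nonpos_of_nonpos_of_nonneg (by linarith) hp1.le
    have h : ConvexOn ℝ (Ioi 0) (qLog ((p - q) / (p - 1)) ∘ ⇑((p - 1) • LinearMap.id)) :=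
      ((convexOn_qLog hq').comp_linearMap _).subset
        (fun z hz => by simpa using (hscale hz).le) (convex_Ioi 0)
    exact (h.smul (inv_nonneg.2 hp1.le)).congr fun z hz => (neg_qLog_rpow_eqOn hp q hz).symm

theorem stmt (p q : ℝ) (hp : 1 < p) (hq : 0 < q) (hq1 : q ≠ 1) :
    MonotoneOn (fun z : ℝ => -(((((p - 1) * z) ^ (1 / (1 - p))) ^ (1 - q) - 1) / (1 - q)))
      (Set.Ioi 0) ∧
    (p ≤ q →
      ConvexOn ℝ (Set.Ioi 0)
        (fun z : ℝ => -(((((p - 1) * z) ^ (1 / (1 - p))) ^ (1 - q) - 1) / (1 - q)))) :=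
  stmt_general p q hp hq1
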